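/- Let G be a bipartite graph with bipartition (X,Y), |X| = r ≤ s = |Y|, n = r + s vertices and m edges with m ≥ n and s dividing m, say m = ds. Then κ'(G)·κ'(G^{bc}) ≤ d(r − d) = (m/s)(r − m/s). -/

import Mathlib

open SimpleGraph Sum

noncomputable def minDeg {V : Type*} [Fintype V] (G : SimpleGraph V) : ℕ :=
  @SimpleGraph.minDegree V G _ (Classical.decRel _)

/-- Edge-connectivity: minimum size of an edge set whose deletion disconnects
the graph (0 if the graph is disconnected or cannot be disconnected). -/
noncomputable def edgeConn {V : Type*} [Fintype V] (G : SimpleGraph V) : ℕ :=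
  sInf {n | ∃ F : Finset (Sym2 V), F.card = n ∧ ↑F ⊆ G.edgeSet ∧
    ¬ (G.deleteEdges ↑F).Connected}

/-- Vertex-connectivity: minimum size of a vertex set whose removal leaves a
graph which is disconnected or has only one vertex. -/
noncomputable def vertConn {V : Type*} [Fintype V] (G : SimpleGraph V) : ℕ :=
  sInf {n | ∃ S : Finset V, S.card = n ∧
    (¬ (G.induce ((↑S : Set V)ᶜ)).Connected ∨ Nat.card (((↑S : Set V)ᶜ : Set V)) = 1)}

/-- `G` on `X ⊕ Y` is bipartite with parts `X` and `Y`. -/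
def IsBipartition {X Y : Type*} (G : SimpleGraph (X ⊕ Y)) : Prop :=
  ∀ a b, G.Adj a b → (a.isLeft ∧ b.isRight) ∨ (a.isRight ∧ b.isLeft)

/-- Bipartite complement with respect to the bipartition `(X, Y)`. -/
def bipCompl {X Y : Type*} (G : SimpleGraph (X ⊕ Y)) : SimpleGraph (X ⊕ Y) where
  Adj a b := ((a.isLeft ∧ b.isRight) ∨ (a.isRight ∧ b.isLeft)) ∧ ¬ G.Adj a b
  symm := ⟨fun a b h => ⟨h.1.symm.imp And.symm And.symm, fun h' => h.2 h'.symm⟩⟩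
  loopless := ⟨fun a h => by rcases h.1 with ⟨h1, h2⟩ | ⟨h1, h2⟩ <;> cases a <;> simp_all⟩

/-!
Summing degrees over `Y` counts every edge once, so the `G`-degrees of the vertices of `Y` average
`m / s = d`: some `y₁` has `d_G(y₁) ≤ d` and some `y₂` has `d_G(y₂) ≥ d`, i.e. degree at most
`r - d` in the bipartite complement. Edge-connectivity is at most every degree, since deleting
the edges at a vertex isolates it.
-/

open Finset

section EdgeConn

variable {V : Type*} [Fintype V] (G : SimpleGraph V) [DecidableRel G.Adj]

/-- Deleting the edges at `v` isolates `v`; on a single vertex nothing disconnects the graph,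
so the infimum is `sInf ∅ = 0`. -/
theorem edgeConn_le_degree (v : V) : edgeConn G ≤ G.degree v := by
  classical
  cases subsingleton_or_nontrivial V with
  | inl hV =>
    have : Nonempty V := ⟨v⟩
    have h0 : edgeConn G = 0 := Nat.sInf_eq_zero.mpr <| .inr <|
      Set.eq_empty_of_forall_notMem fun _ ⟨_, _, _, hF⟩ => hF .of_subsingleton
    exact h0 ▸ Nat.zero_le _
  | inr hV =>
    obtain ⟨w, hwv⟩ := exists_ne v
    refine Nat.sInf_le ⟨G.incidenceFinset v, G.card_incidenceFinset_eq_degree v,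
      fun e he => ((G.mem_incidenceFinset v e).mp he).1, fun hconn => ?_⟩
    obtain ⟨p⟩ := hconn.preconnected v w
    cases p with
    | nil => exact hwv rfl
    | cons hadj _ =>
      rw [deleteEdges_adj] at hadj
      exact hadj.2 ((G.mem_incidenceFinset v _).mpr ⟨hadj.1, Sym2.mem_mk_left _ _⟩)

theorem edgeConn_le_minDegree : edgeConn G ≤ G.minDegree := by
  cases isEmpty_or_nonempty V with
  | inl hV =>
    have h0 : edgeConn G = 0 :=
      Nat.sInf_eq_zero.mpr <| .inl ⟨∅, rfl, by simp, fun h => hV.false h.nonempty.some⟩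
    exact h0 ▸ Nat.zero_le _
  | inr hV =>
    obtain ⟨v, hv⟩ := G.exists_minimal_degree_vertex
    exact hv ▸ edgeConn_le_degree G v

end EdgeConn

theorem isBipartition_bipCompl {X Y : Type*} (G : SimpleGraph (X ⊕ Y)) :
    IsBipartition (bipCompl G) :=
  fun _ _ h => h.1

namespace IsBipartition

variable {X Y : Type*} {G : SimpleGraph (X ⊕ Y)}

theorem eq_bot_of_isEmpty_right [IsEmpty Y] (hG : IsBipartition G) : G = ⊥ := by
  ext a b
  simp only [bot_adj, iff_false]
  intro h
  rcases hG a b h with ⟨-, hb⟩ | ⟨ha, -⟩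
  · exact isEmptyElim (getRight b hb)
  · exact isEmptyElim (getRight a ha)

variable [Fintype X] [Fintype Y]

theorem isBipartiteWith (hG : IsBipartition G) :
    G.IsBipartiteWith ↑(univ.map .inl : Finset (X ⊕ Y)) ↑(univ.map .inr : Finset (X ⊕ Y)) where
  disjoint := by simp [Set.disjoint_left]
  mem_of_adj a b h := by
    rcases hG a b h with ⟨ha, hb⟩ | ⟨ha, hb⟩ <;> cases a <;> cases b <;> simp_all

variable [DecidableRel G.Adj]

theorem degree_inr (hG : IsBipartition G) (y : Y) :
    G.degree (inr y) = #{x | G.Adj (inr y) (inl x)} := by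
  have : G.neighborFinset (inr y) = ({x | G.Adj (inr y) (inl x)} : Finset X).map .inl := by
    ext a
    cases a with
    | inl x => simp
    | inr y' => simpa using fun h => by simpa using hG (inr y) (inr y') h
  rw [← card_neighborFinset_eq_degree, this, card_map]

theorem sum_degree_inr (hG : IsBipartition G) : ∑ y, G.degree (inr y) = #G.edgeFinset := by
  rw [← isBipartiteWith_sum_degrees_eq_card_edges' hG.isBipartiteWith, sum_map]
  rfl

theorem degree_inr_add_degree_bipCompl_inr (hG : IsBipartition G)
    [DecidableRel (bipCompl G).Adj] (y : Y) :
    G.degree (inr y) + (bipCompl G).degree (inr y) = Fintype.card X := by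
  rw [hG.degree_inr, (isBipartition_bipCompl G).degree_inr]
  simpa [bipCompl] using card_filter_add_card_filter_not (s := univ)
    fun x => G.Adj (inr y) (inl x)

end IsBipartition

theorem edgeConn_prod_le_of_dvd_general {X Y : Type*} [Fintype X] [Fintype Y] {r s m d : ℕ}
    (G : SimpleGraph (X ⊕ Y)) (hbip : IsBipartition G)
    (hr : Fintype.card X = r) (hs : Fintype.card Y = s)
    (hm : G.edgeSet.ncard = m) (hd : m = d * s) :
    edgeConn G * edgeConn (bipCompl G) ≤ d * (r - d) := by
  classical
  cases isEmpty_or_nonempty Y with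
  | inl hY =>
    have h0 : edgeConn G = 0 := by
      simpa [hbip.eq_bot_of_isEmpty_right] using edgeConn_le_minDegree (⊥ : SimpleGraph (X ⊕ Y))
    simp [h0]
  | inr hY =>
    have hsum : ∑ y, G.degree (inr y) = ∑ _y : Y, d := by
      rw [hbip.sum_degree_inr, ← Set.ncard_coe_finset, coe_edgeFinset, hm, hd,
        sum_const, card_univ, hs, smul_eq_mul, mul_comm]
    obtain ⟨y₁, -, hy₁⟩ := exists_le_of_sum_le univ_nonempty hsum.le
    obtain ⟨y₂, -, hy₂⟩ := exists_le_of_sum_le univ_nonempty hsum.ge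
    have hcompl := hbip.degree_inr_add_degree_bipCompl_inr y₂
    calc edgeConn G * edgeConn (bipCompl G)
        ≤ G.degree (inr y₁) * (bipCompl G).degree (inr y₂) :=
          Nat.mul_le_mul (edgeConn_le_degree G _) (edgeConn_le_degree _ _)
      _ ≤ d * (r - d) := Nat.mul_le_mul hy₁ (by omega)

theorem edgeConn_prod_le_of_dvd {X Y : Type*} [Fintype X] [Fintype Y] {r s m d : ℕ}
    (G : SimpleGraph (X ⊕ Y)) (hbip : IsBipartition G)
    (hr : Fintype.card X = r) (hs : Fintype.card Y = s) (hrs : r ≤ s)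
    (hm : G.edgeSet.ncard = m) (hm1 : r + s ≤ m) (hd : m = d * s) :
    edgeConn G * edgeConn (bipCompl G) ≤ d * (r - d) :=
  edgeConn_prod_le_of_dvd_general G hbip hr hs hm hd
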